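/- Let δ ∈ V be a dominant integral weight, i.e. ⟨δ, α_i∨⟩ is a nonnegative integer for every i, and define its spin norm ‖δ‖_spin := ‖{δ − ρ} + ρ‖. Then ‖δ‖_spin ≥ ‖δ‖, and equality holds if and only if δ is regular, i.e. ⟨δ, α_i∨⟩ > 0 for every i. -/

import Mathlib

open scoped RealInnerProductSpace

noncomputable section

/-- The pairing `⟨v, a∨⟩ = 2⟪v,a⟫/⟪a,a⟫` of `v` against the coroot of `a`. -/
def copair {V : Type*} [NormedAddCommGroup V] [InnerProductSpace ℝ V] (v a : V) : ℝ :=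
  2 * ⟪v, a⟫ / ⟪a, a⟫

/-- The orthogonal reflection `s_a` in the hyperplane orthogonal to `a`,
as a linear isometry of `V`. -/
def sRefl {V : Type*} [NormedAddCommGroup V] [InnerProductSpace ℝ V] [FiniteDimensional ℝ V]
    (a : V) : V ≃ₗᵢ[ℝ] V :=
  Submodule.reflection (ℝ ∙ a)ᗮ

/-- A finite crystallographic reduced root system `Φ` spanning a finite-dimensional real inner
product space `V`, together with a choice of positive roots `pos`, simple roots `sroot`,
and fundamental weights `fw`. -/
structure RootSystemCtx (V : Type*) [NormedAddCommGroup V] [InnerProductSpace ℝ V]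
    [FiniteDimensional ℝ V] where
  l : ℕ
  Φ : Finset V
  pos : Finset V
  sroot : Fin l → V
  fw : Fin l → V
  nonzero : ∀ a ∈ Φ, a ≠ (0 : V)
  span_top : Submodule.span ℝ (Φ : Set V) = ⊤
  reduced : ∀ a ∈ Φ, ∀ t : ℝ, t • a ∈ Φ → t = 1 ∨ t = -1
  refl_mem : ∀ a ∈ Φ, ∀ b ∈ Φ, sRefl a b ∈ Φ
  crystal : ∀ a ∈ Φ, ∀ b ∈ Φ, ∃ n : ℤ, copair b a = (n : ℝ)
  pos_subset : pos ⊆ Φ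
  mem_pos_or : ∀ a ∈ Φ, (a ∈ pos ∧ -a ∉ pos) ∨ (a ∉ pos ∧ -a ∈ pos)
  sroot_mem : ∀ i, sroot i ∈ pos
  sroot_indep : LinearIndependent ℝ sroot
  pos_nat_comb : ∀ a ∈ pos, ∃ c : Fin l → ℕ, a = ∑ i, (c i : ℝ) • sroot i
  fw_pairing : ∀ i j, copair (fw i) (sroot j) = if i = j then 1 else 0

namespace RootSystemCtx

variable {V : Type*} [NormedAddCommGroup V] [InnerProductSpace ℝ V] [FiniteDimensional ℝ V]
variable (R : RootSystemCtx V)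

/-- The half sum of the positive roots, `ρ = Σ_i ϖ_i`. -/
def rho : V := ∑ i, R.fw i

/-- The Weyl group `W`, the subgroup of the isometry group of `V` generated by the
reflections in the roots. -/
def weylGroup : Subgroup (V ≃ₗᵢ[ℝ] V) :=
  Subgroup.closure {g | ∃ a ∈ R.Φ, g = sRefl a}

/-- `γ` is an expression of `w` as a product of simple reflections. -/
def IsExpression (w : V ≃ₗᵢ[ℝ] V) (γ : List (Fin R.l)) : Prop :=
  w = (γ.map fun i => sRefl (R.sroot i)).prod

/-- `γ` is a reduced expression of `w`: an expression of minimal possible length. -/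
def IsReducedExpression (w : V ≃ₗᵢ[ℝ] V) (γ : List (Fin R.l)) : Prop :=
  R.IsExpression w γ ∧ ∀ γ' : List (Fin R.l), R.IsExpression w γ' → γ.length ≤ γ'.length

/-- A weight is dominant if it pairs nonnegatively with every simple coroot. -/
def IsDominant (v : V) : Prop := ∀ i, 0 ≤ copair v (R.sroot i)

/-- `d` is the dominant representative `{v}` of the Weyl group orbit of `v`. -/
def IsDomRep (v d : V) : Prop := R.IsDominant d ∧ ∃ w ∈ R.weylGroup, w v = d

end RootSystemCtx

/-!
The heart of the matter: for dominant `v` and `w ∈ W`, `⟪w v, ρ⟫ ≤ ⟪v, ρ⟫`, with equality iff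
`w v` is dominant. Since `2ρ` is the sum of the positive roots (a simple reflection permutes the
positive roots other than `α_i`), `2⟪w v, ρ⟫ = ∑_{a > 0} ⟪v, w⁻¹ a⟫`, and `w⁻¹` sends the positive
roots bijectively onto the positive roots up to sign, while `⟪v, a⟫ ≥ 0` for `a > 0`. If `w v` is
not dominant, reflecting it in a simple root `α_i` with `⟨w v, α_i∨⟩ < 0` strictly increases the
pairing with `ρ`, so equality fails.

Applied to `ν = w (δ - ρ)`: as `‖ν‖ = ‖δ - ρ‖`, `‖ν + ρ‖² - ‖δ‖² = 2 (⟪ν, ρ⟫ - ⟪δ - ρ, ρ⟫) ≥ 0`,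
with equality iff `δ - ρ` is dominant, i.e. (by integrality) iff `δ` is regular.
-/

section

variable {V : Type*} [NormedAddCommGroup V] [InnerProductSpace ℝ V]

lemma copair_sub (x y a : V) : copair (x - y) a = copair x a - copair y a := by
  simp only [copair, inner_sub_left, mul_sub, sub_div]

lemma copair_sum {ι : Type*} (s : Finset ι) (f : ι → V) (a : V) :
    copair (∑ i ∈ s, f i) a = ∑ i ∈ s, copair (f i) a := by
  simp only [copair, sum_inner, Finset.mul_sum, Finset.sum_div]

lemma copair_nonneg_iff {v a : V} (ha : a ≠ 0) : 0 ≤ copair v a ↔ 0 ≤ ⟪v, a⟫ := by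
  have : 0 < ⟪a, a⟫ := real_inner_self_pos.mpr ha
  rw [copair, div_nonneg_iff]
  constructor
  · rintro (⟨h, -⟩ | ⟨-, h⟩) <;> linarith
  · intro h; left; constructor <;> linarith

lemma two_mul_inner_eq_of_copair_eq_one {v a : V} (h : copair v a = 1) :
    2 * ⟪v, a⟫ = ⟪a, a⟫ := by
  rw [copair, div_eq_one_iff_eq] at h
  · exact h
  · rintro h0; rw [h0, div_zero] at h; exact zero_ne_one h

lemma norm_add_le_norm_add_iff_of_norm_eq {x y z : V} (h : ‖x‖ = ‖y‖) :
    ‖x + z‖ ≤ ‖y + z‖ ↔ ⟪x, z⟫ ≤ ⟪y, z⟫ := by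
  rw [← sq_le_sq₀ (norm_nonneg _) (norm_nonneg _), norm_add_sq_real, norm_add_sq_real, h]
  constructor <;> intro <;> linarith

lemma norm_add_eq_norm_add_iff_of_norm_eq {x y z : V} (h : ‖x‖ = ‖y‖) :
    ‖x + z‖ = ‖y + z‖ ↔ ⟪x, z⟫ = ⟪y, z⟫ := by
  rw [← sq_eq_sq₀ (norm_nonneg _) (norm_nonneg _), norm_add_sq_real, norm_add_sq_real, h]
  constructor <;> intro <;> linarith

variable [FiniteDimensional ℝ V]

lemma sRefl_apply (a x : V) : sRefl a x = x - copair x a • a := by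
  rw [sRefl, Submodule.reflection_orthogonal_apply, Submodule.reflection_singleton_apply,
    copair, real_inner_comm x a, real_inner_self_eq_norm_sq]
  norm_num
  match_scalars
  ring

lemma sRefl_self {a : V} (ha : a ≠ 0) : sRefl a a = -a := by
  rw [sRefl_apply, copair, mul_div_assoc, div_self (inner_self_ne_zero.mpr ha), mul_one,
    two_smul]
  abel

lemma inner_eq_zero_of_sRefl_eq {a x : V} (h : sRefl a x = x) : ⟪a, x⟫ = 0 :=
  Submodule.mem_orthogonal_singleton_iff_inner_right.mp
    ((Submodule.reflection_eq_self_iff x).mp h)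

end

namespace RootSystemCtx

variable {V : Type*} [NormedAddCommGroup V] [InnerProductSpace ℝ V] [FiniteDimensional ℝ V]
variable (R : RootSystemCtx V)

lemma sroot_mem_Φ (i : Fin R.l) : R.sroot i ∈ R.Φ := R.pos_subset (R.sroot_mem i)

lemma sroot_ne_zero (i : Fin R.l) : R.sroot i ≠ 0 := R.nonzero _ (R.sroot_mem_Φ i)

variable {R}

lemma neg_not_mem_pos {a : V} (ha : a ∈ R.pos) : -a ∉ R.pos :=
  (R.mem_pos_or a (R.pos_subset ha)).elim And.right fun h => absurd ha h.1

lemma neg_mem_pos_of_not_mem_pos {a : V} (ha : a ∈ R.Φ) (h : a ∉ R.pos) : -a ∈ R.pos :=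
  (R.mem_pos_or a ha).elim (fun h' => absurd h'.1 h) And.right

variable (R)

lemma copair_rho_sroot (i : Fin R.l) : copair R.rho (R.sroot i) = 1 := by
  simp [rho, copair_sum, R.fw_pairing]

lemma inner_rho_sroot_pos (i : Fin R.l) : 0 < ⟪R.rho, R.sroot i⟫ := by
  have h := two_mul_inner_eq_of_copair_eq_one (R.copair_rho_sroot i)
  have := real_inner_self_pos.mpr (R.sroot_ne_zero i)
  linarith

lemma mem_span_sroot_of_mem_pos {a : V} (ha : a ∈ R.pos) :
    a ∈ Submodule.span ℝ (Set.range R.sroot) := by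
  obtain ⟨c, rfl⟩ := R.pos_nat_comb a ha
  exact Submodule.sum_mem _ fun i _ =>
    Submodule.smul_mem _ _ (Submodule.subset_span (Set.mem_range_self i))

lemma span_sroot_eq_top : Submodule.span ℝ (Set.range R.sroot) = ⊤ := by
  rw [eq_top_iff, ← R.span_top, Submodule.span_le]
  intro a ha
  by_cases hpos : a ∈ R.pos
  · exact R.mem_span_sroot_of_mem_pos hpos
  · simpa using Submodule.neg_mem _
      (R.mem_span_sroot_of_mem_pos (neg_mem_pos_of_not_mem_pos ha hpos))

def srootBasis : Module.Basis (Fin R.l) ℝ V :=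
  .mk R.sroot_indep R.span_sroot_eq_top.ge

lemma srootBasis_apply (i : Fin R.l) : R.srootBasis i = R.sroot i := Module.Basis.mk_apply _ _ _

variable {R}

lemma srootBasis_equivFun_nonneg {a : V} (ha : a ∈ R.pos) (j : Fin R.l) :
    0 ≤ R.srootBasis.equivFun a j := by
  obtain ⟨c, rfl⟩ := R.pos_nat_comb a ha
  simp_rw [← R.srootBasis_apply, ← Module.Basis.equivFun_symm_apply,
    LinearEquiv.apply_symm_apply]
  exact Nat.cast_nonneg _

lemma eq_smul_sroot_of_srootBasis_equivFun_eq_zero {b : V} {i : Fin R.l}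
    (h : ∀ j ≠ i, R.srootBasis.equivFun b j = 0) :
    b = R.srootBasis.equivFun b i • R.sroot i := by
  conv_lhs => rw [← R.srootBasis.sum_equivFun b]
  rw [Finset.sum_eq_single i (fun j _ hj => by rw [h j hj, zero_smul]) (by simp),
    srootBasis_apply]

/-- `s_i` changes only the `α_i`-coordinate, so if `s_i b < 0` then `b` is a multiple of `α_i`,
hence `b = α_i` as `Φ` is reduced. -/
lemma sRefl_sroot_mem_pos {b : V} {i : Fin R.l} (hb : b ∈ R.pos) (hne : b ≠ R.sroot i) :
    sRefl (R.sroot i) b ∈ R.pos := by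
  by_contra hneg
  have hΦ : sRefl (R.sroot i) b ∈ R.Φ :=
    R.refl_mem _ (R.sroot_mem_Φ i) b (R.pos_subset hb)
  have hcoord : ∀ j ≠ i, R.srootBasis.equivFun b j = 0 := by
    intro j hj
    have h1 := srootBasis_equivFun_nonneg (neg_mem_pos_of_not_mem_pos hΦ hneg) j
    have hαi : R.srootBasis.equivFun (R.sroot i) j = 0 := by
      rw [← srootBasis_apply, R.srootBasis.equivFun_self, if_neg hj.symm]
    rw [map_neg, sRefl_apply, map_sub, map_smul] at h1
    simp only [Pi.neg_apply, Pi.sub_apply, Pi.smul_apply, hαi, smul_zero, sub_zero,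
      Left.nonneg_neg_iff] at h1
    exact le_antisymm h1 (srootBasis_equivFun_nonneg hb j)
  have hb_eq := eq_smul_sroot_of_srootBasis_equivFun_eq_zero hcoord
  rcases R.reduced _ (R.sroot_mem_Φ i) _ (hb_eq ▸ R.pos_subset hb) with h | h
  · exact hne (by rw [hb_eq, h, one_smul])
  · exact neg_not_mem_pos (R.sroot_mem i) (by rwa [hb_eq, h, neg_one_smul] at hb)

lemma image_sRefl_sroot_pos_erase [DecidableEq V] (i : Fin R.l) :
    (R.pos.erase (R.sroot i)).image (sRefl (R.sroot i)) = R.pos.erase (R.sroot i) := by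
  refine Finset.eq_of_subset_of_card_le ?_
    (Finset.card_image_of_injective _ (sRefl (R.sroot i)).injective).ge
  intro b hb
  obtain ⟨a, ha, rfl⟩ := Finset.mem_image.mp hb
  obtain ⟨hane, hapos⟩ := Finset.mem_erase.mp ha
  refine Finset.mem_erase.mpr ⟨fun h => neg_not_mem_pos (R.sroot_mem i) ?_,
    sRefl_sroot_mem_pos hapos hane⟩
  have ha_eq : a = -R.sroot i := (sRefl (R.sroot i)).injective <| by
    rw [h, map_neg, sRefl_self (R.sroot_ne_zero i), neg_neg]
  exact ha_eq ▸ hapos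

variable (R)

lemma sum_pos_eq_two_smul_rho : ∑ a ∈ R.pos, a = (2 : ℝ) • R.rho := by
  classical
  refine InnerProductSpace.ext_inner_left_basis R.srootBasis fun i => ?_
  have hfix : sRefl (R.sroot i) (∑ a ∈ R.pos.erase (R.sroot i), a) =
      ∑ a ∈ R.pos.erase (R.sroot i), a := by
    rw [map_sum]
    conv_rhs => rw [← R.image_sRefl_sroot_pos_erase i]
    exact (Finset.sum_image (f := fun x : V => x)
      fun x _ y _ h => (sRefl (R.sroot i)).injective h).symm
  rw [srootBasis_apply, ← Finset.add_sum_erase _ _ (R.sroot_mem i), inner_add_right,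
    inner_eq_zero_of_sRefl_eq hfix, add_zero, real_inner_smul_right,
    real_inner_comm R.rho]
  exact (two_mul_inner_eq_of_copair_eq_one (R.copair_rho_sroot i)).symm

variable {R}

lemma mem_Φ_of_mem_weylGroup {w : V ≃ₗᵢ[ℝ] V} (hw : w ∈ R.weylGroup) {a : V} (ha : a ∈ R.Φ) :
    w a ∈ R.Φ := by
  induction hw using Subgroup.closure_induction'' generalizing a with
  | mem _ hx => obtain ⟨b, hb, rfl⟩ := hx; exact R.refl_mem b hb a ha
  | inv_mem _ hx =>
    obtain ⟨b, hb, rfl⟩ := hx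
    change (sRefl b).symm a ∈ R.Φ
    rw [sRefl, Submodule.reflection_symm]
    exact R.refl_mem b hb a ha
  | one => exact ha
  | mul _ _ _ _ hx hy => exact hx (hy ha)

lemma inner_nonneg_of_isDominant {v a : V} (hv : R.IsDominant v) (ha : a ∈ R.pos) :
    0 ≤ ⟪v, a⟫ := by
  obtain ⟨c, rfl⟩ := R.pos_nat_comb a ha
  rw [inner_sum]
  refine Finset.sum_nonneg fun i _ => ?_
  rw [real_inner_smul_right]
  exact mul_nonneg (Nat.cast_nonneg _) ((copair_nonneg_iff (R.sroot_ne_zero i)).mp (hv i))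

/-- `a ↦ ±u a`, with the sign making it positive, permutes the positive roots. -/
lemma sum_inner_map_pos_le {v : V} (hv : R.IsDominant v) {u : V ≃ₗᵢ[ℝ] V}
    (hu : ∀ a ∈ R.Φ, u a ∈ R.Φ) : ∑ a ∈ R.pos, ⟪v, u a⟫ ≤ ∑ a ∈ R.pos, ⟪v, a⟫ := by
  classical
  let f : V → V := fun a => if u a ∈ R.pos then u a else -u a
  have hf_mem : Set.MapsTo f R.pos R.pos := fun a ha => by
    by_cases h : u a ∈ R.pos
    · simp [f, h]
    · simpa [f, h] using neg_mem_pos_of_not_mem_pos (hu a (R.pos_subset ha)) h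
  have hf_inj : Set.InjOn f R.pos := by
    intro a ha b hb hab
    simp only [f] at hab
    split_ifs at hab
    · exact u.injective hab
    · have hab' : a = -b := u.injective (by rw [hab, map_neg])
      exact absurd (hab' ▸ ha) (neg_not_mem_pos hb)
    · have hab' : b = -a := u.injective (by rw [← hab, map_neg])
      exact absurd (hab' ▸ hb) (neg_not_mem_pos ha)
    · exact u.injective (neg_injective hab)
  have hle : ∀ a ∈ R.pos, ⟪v, u a⟫ ≤ ⟪v, f a⟫ := fun a ha => by
    by_cases h : u a ∈ R.pos
    · simp [f, h]
    · have := inner_nonneg_of_isDominant hv (hf_mem ha)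
      simp only [f, if_neg h, inner_neg_right] at this ⊢
      linarith
  calc ∑ a ∈ R.pos, ⟪v, u a⟫ ≤ ∑ a ∈ R.pos, ⟪v, f a⟫ := Finset.sum_le_sum hle
    _ = ∑ a ∈ R.pos, ⟪v, a⟫ :=
      Finset.sum_nbij f hf_mem hf_inj (Finset.surjOn_of_injOn_of_card_le f hf_mem hf_inj le_rfl)
        fun _ _ => rfl

lemma inner_rho_le_of_isDominant {v : V} (hv : R.IsDominant v) {w : V ≃ₗᵢ[ℝ] V}
    (hw : w ∈ R.weylGroup) : ⟪w v, R.rho⟫ ≤ ⟪v, R.rho⟫ := by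
  have hsum : ∀ x, ∑ a ∈ R.pos, ⟪x, a⟫ = 2 * ⟪x, R.rho⟫ := fun x => by
    rw [← inner_sum, R.sum_pos_eq_two_smul_rho, real_inner_smul_right]
  have hadj : ∀ a, ⟪w v, a⟫ = ⟪v, w.symm a⟫ := fun a => by
    rw [← w.inner_map_map v, w.apply_symm_apply]
  have key := sum_inner_map_pos_le (u := w.symm) hv fun a ha =>
    mem_Φ_of_mem_weylGroup (inv_mem hw) ha
  simp_rw [← hadj, hsum] at key
  linarith

lemma inner_rho_lt_of_copair_neg {v : V} (hv : R.IsDominant v) {w : V ≃ₗᵢ[ℝ] V}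
    (hw : w ∈ R.weylGroup) {i : Fin R.l} (hi : copair (w v) (R.sroot i) < 0) :
    ⟪w v, R.rho⟫ < ⟪v, R.rho⟫ := by
  have hsw : sRefl (R.sroot i) * w ∈ R.weylGroup :=
    mul_mem (Subgroup.subset_closure ⟨_, R.sroot_mem_Φ i, rfl⟩) hw
  have hle := inner_rho_le_of_isDominant hv hsw
  rw [LinearIsometryEquiv.coe_mul, Function.comp_apply, sRefl_apply, inner_sub_left,
    real_inner_smul_left, real_inner_comm R.rho (R.sroot i)] at hle
  have := mul_neg_of_neg_of_pos hi (R.inner_rho_sroot_pos i)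
  linarith

lemma inner_rho_eq_iff_isDominant {v : V} (hv : R.IsDominant v) {w : V ≃ₗᵢ[ℝ] V}
    (hw : w ∈ R.weylGroup) : ⟪w v, R.rho⟫ = ⟪v, R.rho⟫ ↔ R.IsDominant (w v) := by
  refine ⟨fun heq i => ?_, fun hwv => (inner_rho_le_of_isDominant hv hw).antisymm ?_⟩
  · by_contra hneg
    exact (inner_rho_lt_of_copair_neg hv hw (not_le.mp hneg)).ne heq
  · simpa using inner_rho_le_of_isDominant hwv (inv_mem hw)

lemma isDominant_sub_rho_iff {δ : V} (hδ : ∀ i, ∃ m : ℕ, copair δ (R.sroot i) = m) :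
    R.IsDominant (δ - R.rho) ↔ ∀ i, 0 < copair δ (R.sroot i) := by
  refine forall_congr' fun i => ?_
  obtain ⟨m, hm⟩ := hδ i
  rw [copair_sub, R.copair_rho_sroot, hm, sub_nonneg, Nat.one_le_cast, Nat.cast_pos]
  exact Nat.one_le_iff_ne_zero.trans Nat.pos_iff_ne_zero.symm

end RootSystemCtx

/-- For a dominant integral weight `δ`, the spin norm
`‖δ‖_spin = ‖{δ − ρ} + ρ‖` satisfies `‖δ‖_spin ≥ ‖δ‖`, with equality if and only if
`δ` is regular.  Here `ν = {δ − ρ}` is encoded by the hypothesis that it is the dominant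
representative of the Weyl orbit of `δ − ρ`. -/
theorem statement7 {V : Type*} [NormedAddCommGroup V] [InnerProductSpace ℝ V]
    [FiniteDimensional ℝ V] (R : RootSystemCtx V)
    (δ : V) (hδ : ∀ i, ∃ m : ℕ, copair δ (R.sroot i) = (m : ℝ))
    (ν : V) (hν : R.IsDomRep (δ - R.rho) ν) :
    ‖δ‖ ≤ ‖ν + R.rho‖ ∧ (‖ν + R.rho‖ = ‖δ‖ ↔ ∀ i, 0 < copair δ (R.sroot i)) := by
  obtain ⟨hν_dom, w, hw, rfl⟩ := hν
  have hw_inv : w⁻¹ (w (δ - R.rho)) = δ - R.rho := w.symm_apply_apply _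
  have hle := RootSystemCtx.inner_rho_le_of_isDominant hν_dom (inv_mem hw)
  have heq_iff := RootSystemCtx.inner_rho_eq_iff_isDominant hν_dom (inv_mem hw)
  rw [hw_inv] at hle heq_iff
  have hδ_eq : ‖δ‖ = ‖δ - R.rho + R.rho‖ := by rw [sub_add_cancel]
  rw [hδ_eq, eq_comm, norm_add_le_norm_add_iff_of_norm_eq (w.norm_map _).symm,
    norm_add_eq_norm_add_iff_of_norm_eq (w.norm_map _).symm, heq_iff]
  exact ⟨hle, RootSystemCtx.isDominant_sub_rho_iff hδ⟩
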